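/- For every n×n complex matrix X with tr(Re X) ≥ 0, one has (tr|X|)^2 − tr(Xᴴ X) ≥ (tr(Re X))^2 − tr((Re X)^2). Equivalently, with σ_i the singular values of X and r_i the eigenvalues of Re X, Σ_{i≠j} (σ_i σ_j − r_i r_j) ≥ 0. -/

import Mathlib

set_option maxHeartbeats 1000000

open Matrix
open scoped ComplexOrder

noncomputable section

/-- `Re X = (X + Xᴴ)/2`. -/
def matRe {m : Type*} (X : Matrix m m ℂ) : Matrix m m ℂ := (2⁻¹ : ℂ) • (X + Xᴴ)

/-- `tr |X|` where `|X| = √(X Xᴴ)`; this equals the sum of the singular values of `X`. -/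
def traceAbs {m : Type*} [Fintype m] [DecidableEq m] (X : Matrix m m ℂ) : ℝ :=
  (((Matrix.posSemidef_self_mul_conjTranspose X).1.eigenvectorUnitary.1 *
      diagonal (((↑) : ℝ → ℂ) ∘ (√·) ∘ (Matrix.posSemidef_self_mul_conjTranspose X).1.eigenvalues) *
      (star (Matrix.posSemidef_self_mul_conjTranspose X).1.eigenvectorUnitary :
        Matrix m m ℂ)).trace).re




lemma dot_re_eq_sum_sq {n : ℕ} (u : Fin n → ℂ) :
    (star u ⬝ᵥ u).re = ∑ i, ‖u i‖ ^ 2 := by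
  simp only [dotProduct, Pi.star_apply, Complex.re_sum]
  congr 1; ext i
  rw [Complex.star_def, mul_comm, Complex.mul_conj, ← Complex.normSq_eq_norm_sq]
  simp

lemma cs_abs {n : ℕ} (u w : Fin n → ℂ) :
    ‖∑ j, u j * w j‖ ≤
      Real.sqrt (∑ j, ‖u j‖ ^ 2) * Real.sqrt (∑ j, ‖w j‖ ^ 2) := by
  calc ‖∑ j, u j * w j‖ ≤ ∑ j, ‖u j‖ * ‖w j‖ := by
        simpa [norm_mul] using norm_sum_le Finset.univ (fun j => u j * w j)
    _ ≤ _ := Real.sum_mul_le_sqrt_mul_sqrt _ _ _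

lemma dot_re_nonneg {n : ℕ} (u : Fin n → ℂ) : 0 ≤ (star u ⬝ᵥ u).re := by
  rw [dot_re_eq_sum_sq]
  positivity

lemma cs_dot {n : ℕ} (u w : Fin n → ℂ) :
    (star u ⬝ᵥ w).re ≤ Real.sqrt ((star u ⬝ᵥ u).re) * Real.sqrt ((star w ⬝ᵥ w).re) := by
  rw [dot_re_eq_sum_sq, dot_re_eq_sum_sq]
  calc (star u ⬝ᵥ w).re ≤ ‖star u ⬝ᵥ w‖ := Complex.re_le_norm _
    _ ≤ _ := by
        have := cs_abs (star u) w
        simpa [Complex.norm_conj, dotProduct] using this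

/-- `tr |X| = Σ √(eigenvalues of X Xᴴ)`. -/
lemma traceAbs_eq' {n : ℕ} (X : Matrix (Fin n) (Fin n) ℂ) :
    (((Matrix.posSemidef_self_mul_conjTranspose X).1.eigenvectorUnitary.1 *
      diagonal (((↑) : ℝ → ℂ) ∘ (√·) ∘ (Matrix.posSemidef_self_mul_conjTranspose X).1.eigenvalues) *
      (star (Matrix.posSemidef_self_mul_conjTranspose X).1.eigenvectorUnitary :
        Matrix (Fin n) (Fin n) ℂ)).trace) =
      ∑ k, (Real.sqrt ((Matrix.posSemidef_self_mul_conjTranspose X).1.eigenvalues k) : ℂ) := by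
  set hP := Matrix.posSemidef_self_mul_conjTranspose X
  rw [Matrix.trace_mul_cycle]
  rw [show (star hP.1.eigenvectorUnitary : Matrix (Fin n) (Fin n) ℂ) * hP.1.eigenvectorUnitary.1
      = 1 from ?_, one_mul, Matrix.trace_diagonal]
  · rfl
  · exact Matrix.UnitaryGroup.star_mul_self _

lemma trace_eq_sum_basis {n : ℕ} {H : Matrix (Fin n) (Fin n) ℂ} (hH : H.IsHermitian)
    (M : Matrix (Fin n) (Fin n) ℂ) :
    M.trace = ∑ k, star (⇑(hH.eigenvectorBasis k)) ⬝ᵥ (M *ᵥ ⇑(hH.eigenvectorBasis k)) := by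
  set V : Matrix (Fin n) (Fin n) ℂ := ↑hH.eigenvectorUnitary
  have h1 : M.trace = (star V * M * V).trace := by
    rw [Matrix.trace_mul_cycle, show V * star V = 1 from hH.eigenvectorUnitary.2.2, one_mul]
  rw [h1, Matrix.trace]
  congr 1; ext k
  simp only [Matrix.diag_apply, Matrix.mul_apply, dotProduct, Matrix.mulVec,
    dotProduct, Pi.star_apply, Matrix.star_apply,
    Matrix.IsHermitian.eigenvectorUnitary_apply, V]
  simp only [Finset.sum_mul, Finset.mul_sum]
  rw [Finset.sum_comm]
  congr 1; ext j
  congr 1; ext i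
  ring

lemma traceAbs_eq {n : ℕ} (X : Matrix (Fin n) (Fin n) ℂ) :
    traceAbs X = ∑ k, Real.sqrt ((Matrix.posSemidef_self_mul_conjTranspose X).1.eigenvalues k) := by
  rw [traceAbs, traceAbs_eq']
  simp [Complex.re_sum]

lemma traceAbs_nonneg {n : ℕ} (X : Matrix (Fin n) (Fin n) ℂ) : 0 ≤ traceAbs X := by
  rw [traceAbs_eq]
  exact Finset.sum_nonneg fun _ _ => Real.sqrt_nonneg _

/-- Core lemma: if `A` is a contraction then `Re tr(X A) ≤ tr |X|`. -/
lemma core {n : ℕ} (X A : Matrix (Fin n) (Fin n) ℂ)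
    (hA : ∀ w : Fin n → ℂ, (star (A *ᵥ w) ⬝ᵥ (A *ᵥ w)).re ≤ (star w ⬝ᵥ w).re) :
    ((X * A).trace).re ≤ traceAbs X := by
  have hP := Matrix.posSemidef_self_mul_conjTranspose X
  have hH := hP.1
  rw [trace_eq_sum_basis hH (X * A), traceAbs_eq, Complex.re_sum]
  apply Finset.sum_le_sum
  intro k _
  set v : Fin n → ℂ := ⇑(hH.eigenvectorBasis k) with hv
  have hnorm : (star v ⬝ᵥ v) = 1 := by
    rw [hv, dotProduct_comm, ← EuclideanSpace.inner_eq_star_dotProduct]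
    rw [inner_self_eq_norm_sq_to_K, hH.eigenvectorBasis.orthonormal.1 k]
    norm_num
  have hd : (star (Xᴴ *ᵥ v) ⬝ᵥ (Xᴴ *ᵥ v)).re = hH.eigenvalues k := by
    rw [Matrix.star_mulVec, Matrix.conjTranspose_conjTranspose,
      Matrix.dotProduct_mulVec, Matrix.vecMul_vecMul, ← Matrix.dotProduct_mulVec,
      hH.eigenvalues_eq k]
    rfl
  have hAv : (star (A *ᵥ v) ⬝ᵥ (A *ᵥ v)).re ≤ 1 := by
    have := hA v
    rwa [hnorm, Complex.one_re] at this
  calc (star v ⬝ᵥ ((X * A) *ᵥ v)).re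
      = (star (Xᴴ *ᵥ v) ⬝ᵥ (A *ᵥ v)).re := by
        rw [← Matrix.mulVec_mulVec, Matrix.star_mulVec, Matrix.conjTranspose_conjTranspose,
          Matrix.dotProduct_mulVec]
    _ ≤ Real.sqrt ((star (Xᴴ *ᵥ v) ⬝ᵥ (Xᴴ *ᵥ v)).re) * Real.sqrt ((star (A *ᵥ v) ⬝ᵥ (A *ᵥ v)).re) :=
        cs_dot _ _
    _ ≤ Real.sqrt (hH.eigenvalues k) * 1 := by
        rw [hd]
        have h1 : Real.sqrt ((star (A *ᵥ v) ⬝ᵥ (A *ᵥ v)).re) ≤ 1 := by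
          rw [show (1:ℝ) = Real.sqrt 1 by simp]
          exact Real.sqrt_le_sqrt hAv
        exact mul_le_mul_of_nonneg_left h1 (Real.sqrt_nonneg _)
    _ = Real.sqrt (hH.eigenvalues k) := mul_one _

lemma frob {n : ℕ} (B : Matrix (Fin n) (Fin n) ℂ) (w : Fin n → ℂ) :
    (star (B *ᵥ w) ⬝ᵥ (B *ᵥ w)).re ≤
      (∑ i, ∑ j, ‖B i j‖ ^ 2) * (star w ⬝ᵥ w).re := by
  rw [dot_re_eq_sum_sq, dot_re_eq_sum_sq, Finset.sum_mul]
  apply Finset.sum_le_sum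
  intro i _
  have h2 : ‖(B *ᵥ w) i‖ ≤
      Real.sqrt (∑ j, ‖B i j‖ ^ 2) * Real.sqrt (∑ j, ‖w j‖ ^ 2) := by
    simpa [Matrix.mulVec, dotProduct] using cs_abs (fun j => B i j) w
  have h3 := pow_le_pow_left₀ (norm_nonneg _) h2 2
  calc ‖(B *ᵥ w) i‖ ^ 2 ≤ _ := h3
    _ = (∑ j, ‖B i j‖ ^ 2) * ∑ j, ‖w j‖ ^ 2 := by
        rw [mul_pow, Real.sq_sqrt (by positivity), Real.sq_sqrt (by positivity)]

/-- For every `n×n` complex matrix `X` with `tr(Re X) ≥ 0`,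
`(tr|X|)² − tr(Xᴴ X) ≥ (tr(Re X))² − tr((Re X)²)`
(equivalently, `Σ_{i≠j} (σ_i σ_j − r_i r_j) ≥ 0` for the singular values `σ` of `X` and
the eigenvalues `r` of `Re X`). -/
theorem stmt2 {n : ℕ} (X : Matrix (Fin n) (Fin n) ℂ)
    (h : 0 ≤ ((matRe X).trace).re) :
    (((matRe X).trace).re) ^ 2 - ((matRe X * matRe X).trace).re ≤
      traceAbs X ^ 2 - ((Xᴴ * X).trace).re := by
  set p := (X.trace).re with hp
  have hpRe : ((matRe X).trace).re = p := by
    rw [matRe, Matrix.trace_smul, Matrix.trace_add, Matrix.trace_conjTranspose]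
    simp [Complex.smul_re, Complex.add_re, Complex.conj_re]
    ring
  set B := (2⁻¹ : ℂ) • (X - Xᴴ) with hB
  have hBH : Bᴴ = -B := by
    rw [hB, Matrix.conjTranspose_smul, Matrix.conjTranspose_sub, Matrix.conjTranspose_conjTranspose]
    rw [show (star 2⁻¹ : ℂ) = (2⁻¹ : ℂ) by norm_num]
    rw [← smul_neg, neg_sub]
  have hRH : (matRe X)ᴴ = matRe X := by
    rw [matRe, Matrix.conjTranspose_smul, Matrix.conjTranspose_add,
      Matrix.conjTranspose_conjTranspose]
    rw [show (star 2⁻¹ : ℂ) = (2⁻¹ : ℂ) by norm_num, add_comm]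
  set q := ∑ i, ∑ j, ‖B i j‖ ^ 2 with hqdef
  have hq0 : 0 ≤ q := by positivity
  have hqBB : ((Bᴴ * B).trace).re = q := by
    rw [Matrix.trace, Complex.re_sum, hqdef, Finset.sum_comm]
    apply Finset.sum_congr rfl
    intro j _
    rw [show (Bᴴ * B).diag j = star (fun i => B i j) ⬝ᵥ (fun i => B i j) by
      simp [Matrix.diag_apply, Matrix.mul_apply, dotProduct, Matrix.conjTranspose_apply]]
    rw [dot_re_eq_sum_sq]
  have hkey : matRe X * matRe X - B * B = (2⁻¹ : ℂ) • (X * Xᴴ + Xᴴ * X) := by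
    rw [matRe, hB]
    simp only [Matrix.smul_mul, Matrix.mul_smul, smul_smul, Matrix.add_mul, Matrix.mul_add,
      Matrix.sub_mul, Matrix.mul_sub, smul_sub, smul_add]
    module
  have hq : ((Xᴴ * X).trace).re = ((matRe X * matRe X).trace).re + q := by
    have h1 : (matRe X * matRe X).trace + (Bᴴ * B).trace = (Xᴴ * X).trace := by
      have h2 := congrArg Matrix.trace hkey
      rw [Matrix.trace_sub, Matrix.trace_smul, Matrix.trace_add,
        Matrix.trace_mul_comm X Xᴴ] at h2
      rw [hBH, Matrix.neg_mul, Matrix.trace_neg]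
      rw [sub_eq_add_neg] at h2
      rw [h2, smul_eq_mul]
      ring
    have := congrArg Complex.re h1
    rw [Complex.add_re, hqBB] at this
    linarith
  set c := Real.sqrt (p ^ 2 + q) with hcdef
  have hc2 : c ^ 2 = p ^ 2 + q := Real.sq_sqrt (by positivity)
  suffices hT : c ≤ traceAbs X by
    have h5 : p ^ 2 + q ≤ traceAbs X ^ 2 := by
      rw [← hc2]
      exact pow_le_pow_left₀ (Real.sqrt_nonneg _) hT 2
    rw [hpRe, hq]
    linarith
  rcases eq_or_lt_of_le (Real.sqrt_nonneg (p ^ 2 + q)) with h0 | hpos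
  · rw [← hcdef] at h0
    rw [← h0]
    exact traceAbs_nonneg X
  · rw [← hcdef] at hpos
    have hp0 : (0:ℝ) ≤ p := hpRe ▸ h
    set A := ((c : ℂ))⁻¹ • ((p : ℂ) • (1 : Matrix (Fin n) (Fin n) ℂ) - B) with hA
    have hAw : ∀ w : Fin n → ℂ, A *ᵥ w = ((c : ℂ))⁻¹ • ((p : ℂ) • w - B *ᵥ w) := by
      intro w
      rw [hA, Matrix.smul_mulVec, Matrix.sub_mulVec, Matrix.smul_mulVec,
        Matrix.one_mulVec]
    have hBw : ∀ w : Fin n → ℂ, star (B *ᵥ w) ⬝ᵥ w = -(star w ⬝ᵥ (B *ᵥ w)) := by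
      intro w
      rw [Matrix.star_mulVec, hBH]
      rw [show star w ᵥ* (-B) = -(star w ᵥ* B) from Matrix.vecMul_neg _ _]
      rw [neg_dotProduct, Matrix.dotProduct_mulVec]
    have hcross : ∀ w : Fin n → ℂ, star ((p : ℂ) • w - B *ᵥ w) ⬝ᵥ ((p : ℂ) • w - B *ᵥ w)
        = (p : ℂ) ^ 2 * (star w ⬝ᵥ w) + star (B *ᵥ w) ⬝ᵥ (B *ᵥ w) := by
      intro w
      simp only [star_sub, star_smul, sub_dotProduct, dotProduct_sub,
        smul_dotProduct, dotProduct_smul, smul_eq_mul, Complex.star_def,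
        Complex.conj_ofReal]
      rw [hBw w]
      ring
    have hcontr : ∀ w : Fin n → ℂ, (star (A *ᵥ w) ⬝ᵥ (A *ᵥ w)).re ≤ (star w ⬝ᵥ w).re := by
      intro w
      rw [hAw w, star_smul, smul_dotProduct, dotProduct_smul, hcross w]
      rw [show star ((c : ℂ))⁻¹ = ((c : ℂ))⁻¹ by
        rw [Complex.star_def, ← Complex.ofReal_inv, Complex.conj_ofReal]]
      rw [smul_eq_mul, smul_eq_mul, ← mul_assoc, ← Complex.ofReal_inv, ← Complex.ofReal_mul]
      rw [Complex.re_ofReal_mul, Complex.add_re]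
      rw [show ((p : ℂ) ^ 2 * (star w ⬝ᵥ w)).re = p ^ 2 * (star w ⬝ᵥ w).re by
        rw [← Complex.ofReal_pow, Complex.re_ofReal_mul]]
      have hfrob := frob B w
      have hww := dot_re_nonneg w
      have hcpos : (0:ℝ) < c := hpos
      have h9 : (star (B *ᵥ w) ⬝ᵥ B *ᵥ w).re ≤ q * (star w ⬝ᵥ w).re := by
        rw [hqdef]; exact hfrob
      have h11 : c⁻¹ * c⁻¹ * ((p ^ 2 + q) * (star w ⬝ᵥ w).re) = (star w ⬝ᵥ w).re := by
        rw [← hc2]; field_simp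
      nlinarith [mul_le_mul_of_nonneg_left h9
        (mul_nonneg (inv_nonneg.2 hcpos.le) (inv_nonneg.2 hcpos.le))]
    have hcore := core X A hcontr
    have htrXB : ((X * B).trace).re = -q := by
      have hRB : matRe X = X - B := by
        rw [matRe, hB]
        module
      have h2 : X * B - B * B = matRe X * B := by
        rw [hRB, Matrix.sub_mul]
      have h3 : ((matRe X * B).trace).re = 0 := by
        have hcon : star ((matRe X * B).trace) = -((matRe X * B).trace) := by
          rw [← Matrix.trace_conjTranspose, Matrix.conjTranspose_mul, hBH, hRH,
            Matrix.neg_mul, Matrix.trace_neg, Matrix.trace_mul_comm]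
        have := congrArg Complex.re hcon
        simp only [Complex.star_def, Complex.conj_re, Complex.neg_re] at this
        linarith
      have h4 := congrArg (fun M : Matrix (Fin n) (Fin n) ℂ => (M.trace).re) h2
      simp only [Matrix.trace_sub, Complex.sub_re] at h4
      have h5 : ((B * B).trace).re = -q := by
        have : (Bᴴ * B).trace = -((B * B).trace) := by
          rw [hBH, Matrix.neg_mul, Matrix.trace_neg]
        have h6 := congrArg Complex.re this
        rw [Complex.neg_re, hqBB] at h6
        linarith
      rw [h3, h5] at h4
      linarith
    have htrace : ((X * A).trace).re = c := by
      have h7 : (X * A).trace = ((c : ℂ))⁻¹ * ((p : ℂ) * X.trace - (X * B).trace) := by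
        rw [hA, Matrix.mul_smul, Matrix.mul_sub, Matrix.mul_smul, Matrix.mul_one,
          Matrix.trace_smul, Matrix.trace_sub, Matrix.trace_smul]
        rw [smul_eq_mul, smul_eq_mul]
      rw [h7, ← Complex.ofReal_inv, Complex.re_ofReal_mul, Complex.sub_re,
        Complex.re_ofReal_mul, htrXB, ← hp]
      have hcpos : (0:ℝ) < c := hpos
      field_simp
      linarith [hc2]
    rw [htrace] at hcore
    exact hcore
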